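/- The fields E(t,x) = cos(ωt)·E⁰(x) and B(t,x) = √(3/2) sin(ωt)·(−sin(πx₁)cos(πx₂)cos(2πx₃), cos(πx₁)sin(πx₂)cos(2πx₃), 0), with E⁰(x) = (cos(πx₁)sin(πx₂)sin(−2πx₃), sin(πx₁)cos(πx₂)sin(−2πx₃), sin(πx₁)sin(πx₂)cos(−2πx₃)) and ω = √6 π/ε, satisfy the rescaled source-free Maxwell equations −ε∂_tE + ∇×B = 0, ε∂_tB + ∇×E = 0, ∇·E = 0, ∇·B = 0 on ℝ³. -/

import Mathlib

open scoped BigOperators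

noncomputable section

abbrev V3 := EuclideanSpace ℝ (Fin 3)

/-- partial derivative in direction `i` -/
def pd (i : Fin 3) (f : V3 → ℝ) (x : V3) : ℝ :=
  fderiv ℝ f x (EuclideanSpace.single i 1)

/-- Laplacian -/
def lap (f : V3 → ℝ) (x : V3) : ℝ := ∑ i, pd i (pd i f) x

/-- divergence -/
def div3 (F : V3 → Fin 3 → ℝ) (x : V3) : ℝ := ∑ i, pd i (fun y => F y i) x

/-- curl -/
def curl3 (F : V3 → Fin 3 → ℝ) (x : V3) : Fin 3 → ℝ :=
  ![pd 1 (fun y => F y 2) x - pd 2 (fun y => F y 1) x,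
    pd 2 (fun y => F y 0) x - pd 0 (fun y => F y 2) x,
    pd 0 (fun y => F y 1) x - pd 1 (fun y => F y 0) x]

/-- gradient -/
def grad3 (f : V3 → ℝ) (x : V3) : Fin 3 → ℝ := fun i => pd i f x

/-- cross product -/
def cross3 (u v : Fin 3 → ℝ) : Fin 3 → ℝ :=
  ![u 1 * v 2 - u 2 * v 1, u 2 * v 0 - u 0 * v 2, u 0 * v 1 - u 1 * v 0]

/-! The spatial profiles `E⁰` and `B⁰` of `E` and `B` are products of sines and cosines of the
separate coordinates, so every partial derivative stays in that family. One checks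
`∇ × E⁰ = -3π B⁰`, `∇ × B⁰ = -2π E⁰` and `∇ · E⁰ = ∇ · B⁰ = 0`; the time factors `cos (ω t)` and
`√(3/2) sin (ω t)` then balance these exactly because `ε ω = √6 π = 2π √(3/2)` and
`ε ω √(3/2) = 3π`. -/

open Real

def sepProd (a b c : ℝ → ℝ) (y : V3) : ℝ := a (y 0) * b (y 1) * c (y 2)

lemma pd_sepProd {a b c : ℝ → ℝ} {x : V3} (ha : DifferentiableAt ℝ a (x 0))
    (hb : DifferentiableAt ℝ b (x 1)) (hc : DifferentiableAt ℝ c (x 2)) (i : Fin 3) :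
    pd i (sepProd a b c) x =
      ![deriv a (x 0) * b (x 1) * c (x 2), a (x 0) * deriv b (x 1) * c (x 2),
        a (x 0) * b (x 1) * deriv c (x 2)] i := by
  have hcoord (j : Fin 3) :
      HasFDerivAt (fun y : V3 => y j) (EuclideanSpace.proj j : V3 →L[ℝ] ℝ) x :=
    (EuclideanSpace.proj j : V3 →L[ℝ] ℝ).hasFDerivAt
  have H : HasFDerivAt (sepProd a b c) _ x := ((ha.hasDerivAt.comp_hasFDerivAt x (hcoord 0)).mul
    (hb.hasDerivAt.comp_hasFDerivAt x (hcoord 1))).mul (hc.hasDerivAt.comp_hasFDerivAt x (hcoord 2))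
  rw [pd, H.fderiv]
  fin_cases i <;> simp <;> ring

lemma pd_const (i : Fin 3) (c : ℝ) (x : V3) : pd i (fun _ => c) x = 0 := by
  simp [pd]

lemma pd_const_mul (i : Fin 3) (c : ℝ) (f : V3 → ℝ) (x : V3) :
    pd i (fun y => c * f y) x = c * pd i f x := by
  simp only [pd]
  rw [show (fun y => c * f y) = c • f from rfl, fderiv_const_smul_field]
  rfl

lemma curl3_const_smul (c : ℝ) (F : V3 → Fin 3 → ℝ) (x : V3) :
    curl3 (fun y => c • F y) x = c • curl3 F x := by
  ext i
  fin_cases i <;> simp [curl3, pd_const_mul, mul_sub]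

lemma div3_const_smul (c : ℝ) (F : V3 → Fin 3 → ℝ) (x : V3) :
    div3 (fun y => c • F y) x = c * div3 F x := by
  simp [div3, pd_const_mul, Finset.mul_sum]

lemma deriv_cos_mul_smul {F : Type*} [NormedAddCommGroup F] [NormedSpace ℝ F]
    (ω t : ℝ) (v : F) :
    deriv (fun s => cos (ω * s) • v) t = (-(ω * sin (ω * t))) • v := by
  have hcos : HasDerivAt (fun s => cos (ω * s)) (-(ω * sin (ω * t))) t := by
    simpa [mul_comm] using ((hasDerivAt_id t).const_mul ω).cos
  exact (hcos.smul_const v).deriv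

lemma deriv_const_mul_sin_mul_smul {F : Type*} [NormedAddCommGroup F] [NormedSpace ℝ F]
    (a ω t : ℝ) (v : F) :
    deriv (fun s => (a * sin (ω * s)) • v) t = (a * (ω * cos (ω * t))) • v := by
  have hsin : HasDerivAt (fun s => a * sin (ω * s)) (a * (ω * cos (ω * t))) t := by
    simpa [mul_comm] using (((hasDerivAt_id t).const_mul ω).sin).const_mul a
  exact (hsin.smul_const v).deriv

lemma sqrt_three_halves : √(3 / 2) = √6 / 2 := by
  rw [show (6 : ℝ) = 3 / 2 * 2 ^ 2 by norm_num, sqrt_mul (by norm_num), sqrt_sq (by norm_num)]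
  ring

lemma sqrt_six_mul_pi_eq : √6 * π = 2 * π * √(3 / 2) := by
  rw [sqrt_three_halves]; ring

lemma sqrt_six_mul_pi_mul_sqrt_three_halves : √6 * π * √(3 / 2) = 3 * π := by
  rw [sqrt_three_halves]
  linear_combination π / 2 * mul_self_sqrt (show (0 : ℝ) ≤ 6 by norm_num)

def standingE (x : V3) : Fin 3 → ℝ :=
  ![sepProd (fun u => cos (π * u)) (fun u => sin (π * u)) (fun u => sin (-(2 * π) * u)) x,
    sepProd (fun u => sin (π * u)) (fun u => cos (π * u)) (fun u => sin (-(2 * π) * u)) x,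
    sepProd (fun u => sin (π * u)) (fun u => sin (π * u)) (fun u => cos (-(2 * π) * u)) x]

def standingB (x : V3) : Fin 3 → ℝ :=
  ![sepProd (fun u => -sin (π * u)) (fun u => cos (π * u)) (fun u => cos (2 * π * u)) x,
    sepProd (fun u => cos (π * u)) (fun u => sin (π * u)) (fun u => cos (2 * π * u)) x,
    0]

lemma curl3_standingE (x : V3) : curl3 standingE x = (-(3 * π)) • standingB x := by
  ext i
  fin_cases i <;>
    -- `sepProd` is unfolded only at `x`, so that `pd_sepProd` still sees the fields inside `pd`
    simp (disch := fun_prop) [curl3, standingE, standingB, pd_sepProd, sepProd.eq_1 (y := x)] <;>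
    ring

lemma curl3_standingB (x : V3) : curl3 standingB x = (-(2 * π)) • standingE x := by
  ext i
  fin_cases i <;>
    simp (disch := fun_prop) [curl3, standingE, standingB, pd_sepProd, pd_const,
      sepProd.eq_1 (y := x)] <;>
    ring

lemma div3_standingE (x : V3) : div3 standingE x = 0 := by
  simp (disch := fun_prop) [div3, Fin.sum_univ_three, standingE, pd_sepProd]
  ring

lemma div3_standingB (x : V3) : div3 standingB x = 0 := by
  simp (disch := fun_prop) [div3, Fin.sum_univ_three, standingB, pd_sepProd, pd_const]
  ring

/-- the standing-wave fields of Problem 1 solve the rescaled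
source-free Maxwell equations. -/
theorem stmt10 (ε ω : ℝ) (hε : 0 < ε) (hω : ω = Real.sqrt 6 * Real.pi / ε)
    (E0 : V3 → Fin 3 → ℝ)
    (hE0 : ∀ x : V3, E0 x =
      ![Real.cos (Real.pi * x 0) * Real.sin (Real.pi * x 1) * Real.sin (-(2 * Real.pi) * x 2),
        Real.sin (Real.pi * x 0) * Real.cos (Real.pi * x 1) * Real.sin (-(2 * Real.pi) * x 2),
        Real.sin (Real.pi * x 0) * Real.sin (Real.pi * x 1) * Real.cos (-(2 * Real.pi) * x 2)])
    (E B : ℝ → V3 → Fin 3 → ℝ)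
    (hE : ∀ t x, E t x = Real.cos (ω * t) • E0 x)
    (hB : ∀ (t : ℝ) (x : V3), B t x = (Real.sqrt (3 / 2) * Real.sin (ω * t)) •
      ![-(Real.sin (Real.pi * x 0) * Real.cos (Real.pi * x 1) * Real.cos (2 * Real.pi * x 2)),
        Real.cos (Real.pi * x 0) * Real.sin (Real.pi * x 1) * Real.cos (2 * Real.pi * x 2),
        0]) :
    (∀ t x, -(ε • deriv (fun s => E s x) t) + curl3 (B t) x = 0) ∧
    (∀ t x, ε • deriv (fun s => B s x) t + curl3 (E t) x = 0) ∧
    (∀ t x, div3 (E t) x = 0) ∧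
    (∀ t x, div3 (B t) x = 0) := by
  have hEt (t : ℝ) : E t = fun x => cos (ω * t) • standingE x := by
    ext1 x; rw [hE, funext hE0]; rfl
  have hBt (t : ℝ) : B t = fun x => (√(3 / 2) * sin (ω * t)) • standingB x := by
    ext x i; fin_cases i <;> simp [hB, standingB, sepProd]
  have hεω : ε * ω = √6 * π := by
    rw [hω]; field_simp
  refine ⟨fun t x => ?_, fun t x => ?_, fun t x => ?_, fun t x => ?_⟩
  · simp only [hEt, hBt, deriv_cos_mul_smul, curl3_const_smul, curl3_standingB, smul_smul,
      ← neg_smul, ← add_smul]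
    convert zero_smul ℝ (standingE x)
    linear_combination sin (ω * t) * hεω + sin (ω * t) * sqrt_six_mul_pi_eq
  · simp only [hEt, hBt, deriv_const_mul_sin_mul_smul, curl3_const_smul, curl3_standingE,
      smul_smul, ← add_smul]
    convert zero_smul ℝ (standingB x)
    linear_combination √(3 / 2) * cos (ω * t) * hεω +
      cos (ω * t) * sqrt_six_mul_pi_mul_sqrt_three_halves
  · rw [hEt, div3_const_smul, div3_standingE, mul_zero]
  · rw [hBt, div3_const_smul, div3_standingB, mul_zero]
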